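/- Let Θ = diag(θ_1, …, θ_m) be a diagonal inner multiplier on H²(𝔻, ℂ^m) with Θ(0) = 0 (equivalently θ_i(0) = 0 for all i) and with at least one θ_j not a finite Blaschke product. Then the subspace (Θ K_Θ)^⊥ ⊆ H²(𝔻, ℂ^m) is NOT nearly invariant for the backward shift S*: there exists F ∈ (Θ K_Θ)^⊥ with F(0) = 0 but S*F ∉ (Θ K_Θ)^⊥. In fact F = Θ² e_j is such a function. -/

import Mathlib

noncomputable section

open scoped ENNReal ComplexConjugate
open ContinuousLinearMap

abbrev Cm (m : ℕ) := EuclideanSpace ℂ (Fin m)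
abbrev H2 (m : ℕ) := lp (fun _ : ℕ => Cm m) 2

namespace Hardy

variable {m r : ℕ}

lemma two_toReal : (2 : ℝ≥0∞).toReal = 2 := by norm_num

def shiftFun (f : ℕ → Cm m) : ℕ → Cm m := fun n => match n with
  | 0 => 0
  | k + 1 => f k

lemma shift_memℓp (f : H2 m) : Memℓp (shiftFun (f : ∀ _, Cm m)) 2 := by
  rw [memℓp_gen_iff (by norm_num)]
  have hs : Summable fun n : ℕ => ‖(f : ∀ _, Cm m) n‖ ^ (2 : ℝ≥0∞).toReal :=
    (lp.memℓp f).summable (by norm_num)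
  have : Summable fun n : ℕ =>
      ‖shiftFun (f : ∀ _, Cm m) (n + 1)‖ ^ (2 : ℝ≥0∞).toReal := hs
  exact (summable_nat_add_iff 1).mp this

/-- The forward shift `S` on the vector-valued Hardy space (Taylor-coefficient model). -/
def S (m : ℕ) : H2 m →L[ℂ] H2 m :=
  LinearMap.mkContinuous
    { toFun := fun f => ⟨shiftFun (f : ∀ _, Cm m), shift_memℓp f⟩
      map_add' := by
        intro f g
        apply Subtype.ext
        have key : shiftFun (↑(f + g) : ∀ _, Cm m)
            = shiftFun (f : ∀ _, Cm m) + shiftFun (g : ∀ _, Cm m) := by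
          funext n
          have h : (shiftFun (f : ∀ _, Cm m) + shiftFun (g : ∀ _, Cm m)) n
              = shiftFun (f : ∀ _, Cm m) n + shiftFun (g : ∀ _, Cm m) n := rfl
          rw [h, lp.coeFn_add]
          cases n with
          | zero => simp [shiftFun]
          | succ k => simp [shiftFun]
        exact key
      map_smul' := by
        intro c f
        apply Subtype.ext
        have key : shiftFun (↑(c • f) : ∀ _, Cm m)
            = c • shiftFun (f : ∀ _, Cm m) := by
          funext n
          have h : (c • shiftFun (f : ∀ _, Cm m)) n
              = c • shiftFun (f : ∀ _, Cm m) n := rfl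
          rw [h, lp.coeFn_smul]
          cases n with
          | zero => simp [shiftFun]
          | succ k => simp [shiftFun]
        exact key }
    1
    (by
      intro f
      simp only [one_mul]
      apply le_of_eq
      have h2 : (0:ℝ) < (2 : ℝ≥0∞).toReal := by norm_num
      rw [lp.norm_eq_tsum_rpow h2, lp.norm_eq_tsum_rpow h2]
      congr 1
      have hsum : Summable fun n : ℕ =>
          ‖shiftFun (f : ∀ _, Cm m) n‖ ^ (2 : ℝ≥0∞).toReal := by
        rw [← memℓp_gen_iff (by norm_num)]; exact shift_memℓp f
      have key : ∑' n : ℕ, ‖shiftFun (f : ∀ _, Cm m) n‖ ^ (2 : ℝ≥0∞).toReal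
          = ∑' n : ℕ, ‖(f : ∀ _, Cm m) n‖ ^ (2 : ℝ≥0∞).toReal := by
        rw [hsum.tsum_eq_zero_add]
        simp [shiftFun]
      exact key)

/-- The backward shift `S*` (the adjoint of the forward shift). -/
def Sadj (m : ℕ) : H2 m →L[ℂ] H2 m := ContinuousLinearMap.adjoint (S m)

/-- `T` is a multiplier (multiplication by an operator-valued analytic function),
characterized by intertwining the shifts. -/
def IsMultiplier (T : H2 r →L[ℂ] H2 m) : Prop := S m ∘L T = T ∘L S r

/-- `T` is (the multiplication operator of) an inner multiplier: an isometric multiplier. -/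
def IsInnerMultiplier (T : H2 r →L[ℂ] H2 m) : Prop :=
  (∀ f, ‖T f‖ = ‖f‖) ∧ IsMultiplier T

/-- The model space `K_Θ = H² ⊖ Θ H²`. -/
def modelSpace (T : H2 r →L[ℂ] H2 m) : Submodule ℂ (H2 m) := (LinearMap.range (T : H2 r →ₗ[ℂ] H2 m))ᗮ

/-- The constant function with value `v` (Taylor coefficients `(v,0,0,…)`). -/
def const (v : Cm m) : H2 m := lp.single 2 0 v

/-- The constant function `eᵢ`. -/
def e (m : ℕ) (i : Fin m) : H2 m := const (EuclideanSpace.single i 1)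

lemma coord_norm_le (x : Cm m) (i : Fin m) : ‖x i‖ ≤ ‖x‖ := by
  rw [EuclideanSpace.norm_eq]
  have h1 : ‖x i‖ = Real.sqrt (‖x i‖ ^ 2) := by
    rw [Real.sqrt_sq (norm_nonneg _)]
  rw [h1]
  apply Real.sqrt_le_sqrt
  exact Finset.single_le_sum (f := fun j => ‖x j‖ ^ 2)
    (fun j _ => by positivity) (Finset.mem_univ i)

lemma coord_memℓp (i : Fin m) (f : H2 m) :
    Memℓp (fun n => EuclideanSpace.single (0 : Fin 1) ((f : ∀ _, Cm m) n i)) 2 := by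
  rw [memℓp_gen_iff (by norm_num)]
  have hs : Summable fun n : ℕ => ‖(f : ∀ _, Cm m) n‖ ^ (2 : ℝ≥0∞).toReal :=
    (lp.memℓp f).summable (by norm_num)
  apply Summable.of_nonneg_of_le (fun n => by positivity) _ hs
  intro n
  have : ‖EuclideanSpace.single (0 : Fin 1) ((f : ∀ _, Cm m) n i)‖
      = ‖(f : ∀ _, Cm m) n i‖ := by
    simp [EuclideanSpace.norm_single]
  rw [this]
  have h := coord_norm_le ((f : ∀ _, Cm m) n) i
  exact Real.rpow_le_rpow (norm_nonneg _) h (by norm_num)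

/-- The `i`-th coordinate (column) of a `ℂᵐ`-valued Hardy space function, as a scalar
Hardy space function. -/
def coord (i : Fin m) (f : H2 m) : H2 1 :=
  ⟨fun n => EuclideanSpace.single (0 : Fin 1) ((f : ∀ _, Cm m) n i), coord_memℓp i f⟩

/-- A multiplier on `H²(𝔻, ℂᵐ)` is diagonal, `Ψ = diag(ψ₁, …, ψ_m)`, with scalar
multipliers `ψᵢ` represented by the operators `t i`. -/
def IsDiagonal (T : H2 m →L[ℂ] H2 m) (t : Fin m → (H2 1 →L[ℂ] H2 1)) : Prop :=
  ∀ (f : H2 m) (i : Fin m), coord i (T f) = t i (coord i f)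

/-- The analytic function on the disc associated to a scalar Hardy space element. -/
def toFun (f : H2 1) (z : ℂ) : ℂ := ∑' n : ℕ, ((f : ∀ _, Cm 1) n 0) * z ^ n

/-- `F` is a finite Blaschke product on the unit disc. -/
def IsFiniteBlaschke (F : ℂ → ℂ) : Prop :=
  ∃ (k : ℕ) (c : ℂ) (a : Fin k → ℂ), ‖c‖ = 1 ∧ (∀ i, ‖a i‖ < 1) ∧
    ∀ z ∈ Metric.ball (0 : ℂ) 1,
      F z = c * ∏ i, (z - a i) / (1 - (starRingEnd ℂ) (a i) * z)

/-- `W = M ⊖ (M ∩ zH²)`. -/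
def Wspace (M : Submodule ℂ (H2 m)) : Submodule ℂ (H2 m) :=
  M ⊓ (M ⊓ LinearMap.range (S m : H2 m →ₗ[ℂ] H2 m))ᗮ

end Hardy

/-! Since `Θ(0) = 0`, `Θ eⱼ` vanishes at `0`, hence so does `Θ² eⱼ`, and `Θ² eⱼ ∈ Θ (Θ H²)` is
orthogonal to `Θ K_Θ`. Because `Θ` is an isometry intertwining the shifts,
`⟪Θ k, S*(Θ y)⟫ = ⟪S Θ k, Θ y⟫ = ⟪Θ S k, Θ y⟫ = ⟪S k, y⟫ = ⟪k, S* y⟫`, so `S*(Θ² eⱼ) ⊥ Θ K_Θ`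
would force `S*(Θ eⱼ) ⊥ K_Θ`, i.e. `S*(Θ eⱼ) = Θ G`. Then `Θ eⱼ = S S*(Θ eⱼ) = S Θ G = Θ S G`,
and injectivity of `Θ` gives `eⱼ = S G`, which is absurd at the constant coefficient. -/

open scoped InnerProductSpace

namespace Hardy

variable {m r : ℕ}

def tail (f : H2 m) : H2 m :=
  ⟨fun n => (f : ∀ _, Cm m) (n + 1), show Memℓp _ 2 from (memℓp_gen_iff (by norm_num)).mpr <|
    (summable_nat_add_iff 1).mpr ((lp.memℓp f).summable (by norm_num))⟩

lemma S_apply_zero (f : H2 m) : ((S m f : H2 m) : ∀ _, Cm m) 0 = 0 := rfl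

lemma inner_S_left (g f : H2 m) : ⟪S m g, f⟫_ℂ = ⟪g, tail f⟫_ℂ := by
  rw [lp.inner_eq_tsum, lp.inner_eq_tsum,
    (lp.summable_inner (𝕜 := ℂ) (S m g) f).tsum_eq_zero_add, S_apply_zero, inner_zero_left,
    zero_add]
  rfl

lemma Sadj_eq_tail (f : H2 m) : Sadj m f = tail f :=
  ext_inner_left ℂ fun g => by rw [Sadj, ContinuousLinearMap.adjoint_inner_right, inner_S_left]

lemma S_Sadj_of_apply_zero {f : H2 m} (hf : (f : ∀ _, Cm m) 0 = 0) : S m (Sadj m f) = f := by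
  rw [Sadj_eq_tail]
  refine lp.ext (funext fun n => ?_)
  cases n with
  | zero => exact hf.symm
  | succ k => rfl

lemma inner_Sadj_right (k f : H2 m) : ⟪k, Sadj m f⟫_ℂ = ⟪S m k, f⟫_ℂ := by
  rw [Sadj, ContinuousLinearMap.adjoint_inner_right]

lemma coord_const (i : Fin m) (v : Cm m) : coord i (const v) = v i • e 1 0 := by
  refine lp.ext (funext fun n => ?_)
  cases n <;> ext k <;> fin_cases k <;> simp [coord, e, const, lp.single_apply]

namespace IsMultiplier

variable {T : H2 r →L[ℂ] H2 m}

lemma S_apply (hT : IsMultiplier T) (f : H2 r) : S m (T f) = T (S r f) :=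
  congrFun (congrArg DFunLike.coe hT) f

lemma apply_zero_of_apply_zero (hT : IsMultiplier T) {f : H2 r} (hf : (f : ∀ _, Cm r) 0 = 0) :
    ((T f : H2 m) : ∀ _, Cm m) 0 = 0 := by
  rw [← S_Sadj_of_apply_zero hf, ← hT.S_apply, S_apply_zero]

end IsMultiplier

namespace IsInnerMultiplier

variable {T : H2 r →L[ℂ] H2 m}

def toLinearIsometry (hT : IsInnerMultiplier T) : H2 r →ₗᵢ[ℂ] H2 m := ⟨T.toLinearMap, hT.1⟩

lemma inner_map_map (hT : IsInnerMultiplier T) (f g : H2 r) : ⟪T f, T g⟫_ℂ = ⟪f, g⟫_ℂ :=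
  hT.toLinearIsometry.inner_map_map f g

lemma injective (hT : IsInnerMultiplier T) : Function.Injective T :=
  hT.toLinearIsometry.injective

lemma orthogonal_modelSpace (hT : IsInnerMultiplier T) :
    (modelSpace T)ᗮ = LinearMap.range (T : H2 r →ₗ[ℂ] H2 m) := by
  have hclosed : IsClosed (LinearMap.range (T : H2 r →ₗ[ℂ] H2 m) : Set (H2 m)) := by
    rw [LinearMap.coe_range]
    exact (AddMonoidHomClass.isometry_of_norm T hT.1).isClosedEmbedding.isClosed_range
  rw [modelSpace, Submodule.orthogonal_orthogonal_eq_closure,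
    hclosed.submodule_topologicalClosure_eq]

lemma inner_apply_Sadj_apply (hT : IsInnerMultiplier T) (k y : H2 r) :
    ⟪T k, Sadj m (T y)⟫_ℂ = ⟪k, Sadj r y⟫_ℂ := by
  rw [inner_Sadj_right, inner_Sadj_right, hT.2.S_apply, hT.inner_map_map]

lemma apply_mem_orthogonal_map_modelSpace {T : H2 m →L[ℂ] H2 m} (hT : IsInnerMultiplier T)
    {x : H2 m} (hx : x ∈ (modelSpace T)ᗮ) :
    T x ∈ ((modelSpace T).map (T : H2 m →ₗ[ℂ] H2 m))ᗮ := by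
  rintro _ ⟨k, hk, rfl⟩
  exact (hT.inner_map_map k x).trans (Submodule.inner_right_of_mem_orthogonal hk hx)

lemma Sadj_mem_orthogonal_modelSpace {T : H2 m →L[ℂ] H2 m} (hT : IsInnerMultiplier T)
    {y : H2 m} (h : Sadj m (T y) ∈ ((modelSpace T).map (T : H2 m →ₗ[ℂ] H2 m))ᗮ) :
    Sadj m y ∈ (modelSpace T)ᗮ := fun k hk => by
  rw [← hT.inner_apply_Sadj_apply]
  exact h _ (Submodule.mem_map_of_mem hk)

lemma Sadj_apply_const_notMem_range (hT : IsInnerMultiplier T) {v : Cm r} (hv : v ≠ 0)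
    (h0 : ((T (const v) : H2 m) : ∀ _, Cm m) 0 = 0) :
    Sadj m (T (const v)) ∉ LinearMap.range (T : H2 r →ₗ[ℂ] H2 m) := by
  rintro ⟨G, hG⟩
  have hSG : S r G = const v := hT.injective <| by
    rw [← hT.2.S_apply, show T G = _ from hG, S_Sadj_of_apply_zero h0]
  have hcoeff := congrArg (fun f : H2 r => (f : ∀ _, Cm r) 0) hSG
  simp only [S_apply_zero, const, lp.single_apply_self] at hcoeff
  exact hv hcoeff.symm

end IsInnerMultiplier

lemma IsDiagonal.apply_const_apply_zero {T : H2 m →L[ℂ] H2 m} {t : Fin m → (H2 1 →L[ℂ] H2 1)}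
    (hT : IsDiagonal T t) (h0 : ∀ i, ((t i (e 1 0) : H2 1) : ∀ _ : ℕ, Cm 1) 0 = 0) (v : Cm m) :
    ((T (const v) : H2 m) : ∀ _, Cm m) 0 = 0 := by
  ext i
  change ((coord i (T (const v)) : H2 1) : ∀ _, Cm 1) 0 0 = 0
  rw [hT, coord_const, map_smul, lp.coeFn_smul, Pi.smul_apply, h0, smul_zero]
  rfl

end Hardy

open Hardy in
theorem stmt_8_general (m : ℕ) (j : Fin m)
    (Θ : H2 m →L[ℂ] H2 m) (θ : Fin m → (H2 1 →L[ℂ] H2 1))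
    (hΘ : IsInnerMultiplier Θ) (hdiag : IsDiagonal Θ θ)
    (h0 : ∀ i, ((θ i (e 1 0) : H2 1) : ∀ _ : ℕ, Cm 1) 0 = 0) :
    Θ (Θ (e m j)) ∈ ((modelSpace Θ).map (Θ : H2 m →ₗ[ℂ] H2 m))ᗮ ∧
    ((Θ (Θ (e m j)) : H2 m) : ∀ _ : ℕ, Cm m) 0 = 0 ∧
    Sadj m (Θ (Θ (e m j))) ∉ ((modelSpace Θ).map (Θ : H2 m →ₗ[ℂ] H2 m))ᗮ := by
  have hΘe : ((Θ (e m j) : H2 m) : ∀ _, Cm m) 0 = 0 := hdiag.apply_const_apply_zero h0 _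
  have hej : (EuclideanSpace.single j 1 : Cm m) ≠ 0 := by simp
  refine ⟨hΘ.apply_mem_orthogonal_map_modelSpace ?_, hΘ.2.apply_zero_of_apply_zero hΘe, fun h => ?_⟩
  · rw [hΘ.orthogonal_modelSpace]
    exact LinearMap.mem_range_self _ _
  · have hrange := hΘ.Sadj_mem_orthogonal_modelSpace h
    rw [hΘ.orthogonal_modelSpace] at hrange
    exact hΘ.Sadj_apply_const_notMem_range hej hΘe hrange

open Hardy in
/-- If `Θ = diag(θ₁, …, θ_m)` is a diagonal inner multiplier with `Θ(0) = 0` and some `θⱼ`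
not a finite Blaschke product, then `(Θ K_Θ)ᗮ` is not nearly `S*`-invariant; in fact
`F = Θ² eⱼ` lies in `(Θ K_Θ)ᗮ`, vanishes at `0`, but `S*F ∉ (Θ K_Θ)ᗮ`. -/
theorem stmt_8 (m : ℕ) (j : Fin m)
    (Θ : H2 m →L[ℂ] H2 m) (θ : Fin m → (H2 1 →L[ℂ] H2 1))
    (hΘ : IsInnerMultiplier Θ) (hdiag : IsDiagonal Θ θ)
    (hθ : ∀ i, IsInnerMultiplier (θ i))
    (h0 : ∀ i, ((θ i (e 1 0) : H2 1) : ∀ _ : ℕ, Cm 1) 0 = 0)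
    (hbl : ¬ IsFiniteBlaschke (toFun (θ j (e 1 0)))) :
    Θ (Θ (e m j)) ∈ ((modelSpace Θ).map (Θ : H2 m →ₗ[ℂ] H2 m))ᗮ ∧
    ((Θ (Θ (e m j)) : H2 m) : ∀ _ : ℕ, Cm m) 0 = 0 ∧
    Sadj m (Θ (Θ (e m j))) ∉ ((modelSpace Θ).map (Θ : H2 m →ₗ[ℂ] H2 m))ᗮ :=
  stmt_8_general m j Θ θ hΘ hdiag h0
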